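/- arXiv:2501.13039 — 2 statements merged into one kernel-verified Lean document; each statement's English description precedes it below -/
import Mathlib

section
/- Let 𝒞 be a C*-algebra, let 𝒜 and ℬ be finite-dimensional *-subalgebras of 𝒞, and let Ω be a nonempty locally compact Hausdorff space. Then d₀(𝒜, ℬ) ≤ d₀(C₀(Ω, 𝒜), C₀(Ω, ℬ)), where C₀(Ω, 𝒜) and C₀(Ω, ℬ) are viewed as C*-subalgebras of C₀(Ω, 𝒞). -/
/-
Evaluation at a point is a contraction `C₀(Ω, 𝒞) → 𝒞` carrying `C₀(Ω, ℬ)` into `ℬ`. By Urysohn,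
every `x` in the unit ball of `𝒜` is the value at some `t₀` of `t ↦ φ(t) x`, an element of the
unit ball of `C₀(Ω, 𝒜)` when `φ` is a bump with `φ(t₀) = 1` and `0 ≤ φ ≤ 1`. Hence every
near-inclusion `C₀(Ω, 𝒜) ⊆_γ C₀(Ω, ℬ)` yields `𝒜 ⊆_γ ℬ`, and symmetrically.
-/

open Metric
open scoped ZeroAtInfty

/-- `A ⊆_γ B`: every element of the closed unit ball of `A` is within distance `γ` of `B`. -/
def nearIncl {X : Type*} [NormedAddCommGroup X] (A B : Set X) (γ : ℝ) : Prop :=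
  ∀ x ∈ A ∩ closedBall (0 : X) 1, ∃ y ∈ B, ‖x - y‖ ≤ γ

/-- The Christensen distance `d₀`. -/
noncomputable def d0 {X : Type*} [NormedAddCommGroup X] (A B : Set X) : ℝ :=
  sInf {γ : ℝ | 0 < γ ∧ nearIncl A B γ ∧ nearIncl B A γ}

/-- `C₀(Ω, 𝒜)` viewed as a subset of `C₀(Ω, 𝒞)`: the continuous functions vanishing at infinity
with values in `𝒜`. -/
def c0ValIn {Ω C : Type*} [TopologicalSpace Ω] [NormedAddCommGroup C]
    (A : Set C) : Set C₀(Ω, C) :=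
  {f | ∀ t, f t ∈ A}

namespace ZeroAtInftyContinuousMap

variable {α : Type*} [TopologicalSpace α]

theorem norm_apply_le {E : Type*} [SeminormedAddCommGroup E] (f : C₀(α, E)) (t : α) :
    ‖f t‖ ≤ ‖f‖ := by
  rw [← norm_toBCF_eq_norm]
  exact f.toBCF.norm_coe_le_norm t

theorem exists_apply_eq_one_norm_le_one [LocallyCompactSpace α] [RegularSpace α] (t₀ : α) :
    ∃ φ : C₀(α, ℝ), φ t₀ = 1 ∧ ‖φ‖ ≤ 1 := by
  obtain ⟨φ, hφ_one, -, hφ_supp, hφ_mem⟩ :=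
    exists_continuous_one_zero_of_isCompact isCompact_singleton isClosed_empty
      (Set.disjoint_empty {t₀})
  refine ⟨⟨φ, hφ_supp.is_zero_at_infty⟩, hφ_one rfl, ?_⟩
  rw [← norm_toBCF_eq_norm]
  refine (BoundedContinuousFunction.norm_le zero_le_one).2 fun t => ?_
  show ‖φ t‖ ≤ 1
  rw [Real.norm_of_nonneg (hφ_mem t).1]
  exact (hφ_mem t).2

section SmulRight

variable {E : Type*} [NormedAddCommGroup E] [NormedSpace ℝ E]

def smulRight (φ : C₀(α, ℝ)) (x : E) : C₀(α, E) where
  toFun t := φ t • x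
  continuous_toFun := by fun_prop
  zero_at_infty' := by simpa using (zero_at_infty φ).smul_const x

@[simp]
theorem smulRight_apply (φ : C₀(α, ℝ)) (x : E) (t : α) : φ.smulRight x t = φ t • x :=
  rfl

theorem norm_smulRight_le (φ : C₀(α, ℝ)) (x : E) : ‖φ.smulRight x‖ ≤ ‖φ‖ * ‖x‖ := by
  rw [← norm_toBCF_eq_norm]
  refine (BoundedContinuousFunction.norm_le (by positivity)).2 fun t => ?_
  calc ‖φ t • x‖ = ‖φ t‖ * ‖x‖ := norm_smul _ _
    _ ≤ ‖φ‖ * ‖x‖ := by gcongr; exact φ.norm_apply_le t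

end SmulRight

end ZeroAtInftyContinuousMap

section NearIncl

variable {X : Type*} [NormedAddCommGroup X]

theorem nearIncl_one_of_zero_mem (A : Set X) {B : Set X} (hB : 0 ∈ B) : nearIncl A B 1 :=
  fun x hx => ⟨0, hB, by simpa using mem_closedBall_zero_iff.mp hx.2⟩

theorem d0_le_d0_of_nearIncl_imp {Y : Type*} [NormedAddCommGroup Y]
    {A B : Set X} {A' B' : Set Y}
    (hA' : 0 ∈ A') (hB' : 0 ∈ B') (hAB : ∀ γ, nearIncl A' B' γ → nearIncl A B γ)
    (hBA : ∀ γ, nearIncl B' A' γ → nearIncl B A γ) : d0 A B ≤ d0 A' B' :=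
  csInf_le_csInf ⟨0, fun _ hγ => hγ.1.le⟩
    ⟨1, one_pos, nearIncl_one_of_zero_mem A' hB', nearIncl_one_of_zero_mem B' hA'⟩
    fun _ ⟨hγ, hγAB, hγBA⟩ => ⟨hγ, hAB _ hγAB, hBA _ hγBA⟩

end NearIncl

section C0ValIn

variable {Ω E : Type*} [TopologicalSpace Ω] [NormedAddCommGroup E]

theorem zero_mem_c0ValIn {A : Set E} (hA : 0 ∈ A) : (0 : C₀(Ω, E)) ∈ c0ValIn A :=
  fun _ => hA

theorem nearIncl_of_nearIncl_c0ValIn [NormedSpace ℝ E]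
    [LocallyCompactSpace Ω] [RegularSpace Ω] [Nonempty Ω] {A B : Set E} (hA : Balanced ℝ A) {γ : ℝ}
    (h : nearIncl (c0ValIn (Ω := Ω) A) (c0ValIn (Ω := Ω) B) γ) : nearIncl A B γ := by
  rintro x ⟨hxA, hx⟩
  obtain ⟨t₀⟩ := ‹Nonempty Ω›
  obtain ⟨φ, hφ_one, hφ_norm⟩ := ZeroAtInftyContinuousMap.exists_apply_eq_one_norm_le_one t₀
  have hf_mem : φ.smulRight x ∈ c0ValIn A := fun t =>
    hA.smul_mem ((φ.norm_apply_le t).trans hφ_norm) hxA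
  have hf_norm : ‖φ.smulRight x‖ ≤ 1 :=
    (φ.norm_smulRight_le x).trans
      (mul_le_one₀ hφ_norm (norm_nonneg x) (mem_closedBall_zero_iff.mp hx))
  obtain ⟨g, hgB, hfg⟩ := h _ ⟨hf_mem, mem_closedBall_zero_iff.mpr hf_norm⟩
  refine ⟨g t₀, hgB t₀, ?_⟩
  calc ‖x - g t₀‖ = ‖(φ.smulRight x - g) t₀‖ := by simp [hφ_one]
    _ ≤ ‖φ.smulRight x - g‖ := ZeroAtInftyContinuousMap.norm_apply_le _ t₀
    _ ≤ γ := hfg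

end C0ValIn

theorem d0_le_d0_c0_of_finiteDimensional_general
    {C : Type*} [NonUnitalNormedRing C] [StarRing C] [NormedSpace ℂ C]
    (Ω : Type*) [TopologicalSpace Ω] [LocallyCompactSpace Ω] [T2Space Ω] [Nonempty Ω]
    (A B : NonUnitalStarSubalgebra ℂ C) :
    d0 (A : Set C) (B : Set C) ≤
      d0 (c0ValIn (Ω := Ω) (A : Set C)) (c0ValIn (Ω := Ω) (B : Set C)) := by
  have balanced (S : NonUnitalStarSubalgebra ℂ C) : Balanced ℝ (S : Set C) :=
    balanced_iff_smul_mem.2 fun r _ x hx => by simpa using S.smul_mem (r : ℂ) hx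
  exact d0_le_d0_of_nearIncl_imp (zero_mem_c0ValIn A.zero_mem) (zero_mem_c0ValIn B.zero_mem)
    (fun _ => nearIncl_of_nearIncl_c0ValIn (balanced A))
    (fun _ => nearIncl_of_nearIncl_c0ValIn (balanced B))

/-- For finite-dimensional `*`-subalgebras `𝒜, ℬ` of a C*-algebra `𝒞` and a nonempty locally
compact Hausdorff space `Ω`, `d₀(𝒜, ℬ) ≤ d₀(C₀(Ω, 𝒜), C₀(Ω, ℬ))`. -/
theorem d0_le_d0_c0_of_finiteDimensional
    {C : Type*} [NonUnitalNormedRing C] [StarRing C] [CStarRing C] [NormedSpace ℂ C]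
    [IsScalarTower ℂ C C] [SMulCommClass ℂ C C] [StarModule ℂ C] [CompleteSpace C]
    (Ω : Type*) [TopologicalSpace Ω] [LocallyCompactSpace Ω] [T2Space Ω] [Nonempty Ω]
    (A B : NonUnitalStarSubalgebra ℂ C)
    [FiniteDimensional ℂ A] [FiniteDimensional ℂ B] :
    d0 (A : Set C) (B : Set C) ≤
      d0 (c0ValIn (Ω := Ω) (A : Set C)) (c0ValIn (Ω := Ω) (B : Set C)) :=
  d0_le_d0_c0_of_finiteDimensional_general Ω A B
end

section
/- Let 𝒞 be a C*-algebra, let 𝒜 and ℬ be C*-subalgebras of 𝒞, let Ω be a locally compact Hausdorff space, and let δ > 0. For every f in the closed unit ball of C₀(Ω, ℬ) there exists g in the closed unit ball of C₀(Ω, 𝒜) such that ‖f − g‖ ≤ d_KK(𝒜, ℬ) + 4δ (where C₀(Ω, 𝒜) and C₀(Ω, ℬ) are viewed as C*-subalgebras of C₀(Ω, 𝒞)). -/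
open Metric
open scoped ZeroAtInfty

/-- The Kadison–Kastler distance between two subsets of a normed space: the Hausdorff-type
distance between their closed unit balls. -/
noncomputable def dKK {X : Type*} [NormedAddCommGroup X] (A B : Set X) : ℝ :=
  max (⨆ x : ↥(A ∩ closedBall (0 : X) 1), infDist (x : X) (B ∩ closedBall (0 : X) 1))
      (⨆ y : ↥(B ∩ closedBall (0 : X) 1), infDist (y : X) (A ∩ closedBall (0 : X) 1))

/-! The approximant is built in the codomain rather than on `Ω`. Every point `x` of the unit
ball of `ℬ` is within `d_KK(𝒜, ℬ) + δ` of the unit ball of `𝒜`, which is convex, so a partition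
of unity on the (paracompact) unit ball of `ℬ` glues locally constant choices into a continuous
`φ` with `‖x - φ x‖ < d_KK(𝒜, ℬ) + 2δ` and `φ = 0` near `0`. Then `g = φ ∘ f` works. -/

open Filter Topology

namespace ZeroAtInftyContinuousMap

variable {Ω E F : Type*} [TopologicalSpace Ω]

theorem norm_le [NormedAddCommGroup E] (f : C₀(Ω, E)) {c : ℝ} (hc : 0 ≤ c) :
    ‖f‖ ≤ c ↔ ∀ t, ‖f t‖ ≤ c := by
  rw [← norm_toBCF_eq_norm]
  exact BoundedContinuousFunction.norm_le hc

def compCodRestrict [TopologicalSpace E] [Zero E] [TopologicalSpace F] [Zero F]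
    (f : C₀(Ω, E)) {s : Set E} (hs : ∀ t, f t ∈ s) (φ : C(s, F))
    (hφ : Tendsto φ (comap Subtype.val (𝓝 0)) (𝓝 0)) : C₀(Ω, F) where
  toFun t := φ ⟨f t, hs t⟩
  continuous_toFun := φ.continuous.comp (f.continuous.codRestrict hs)
  zero_at_infty' := hφ.comp (tendsto_comap_iff.mpr (zero_at_infty f))

end ZeroAtInftyContinuousMap

theorem infDist_le_dKK {X : Type*} [NormedAddCommGroup X] {A B : Set X} {y : X}
    (hy : y ∈ B ∩ closedBall 0 1) : infDist y (A ∩ closedBall 0 1) ≤ dKK A B := by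
  have hbdd : BddAbove (Set.range fun y : ↥(B ∩ closedBall (0 : X) 1) =>
      infDist (y : X) (A ∩ closedBall 0 1)) := by
    refine ⟨2, Set.forall_mem_range.mpr fun y => ?_⟩
    rcases (A ∩ closedBall (0 : X) 1).eq_empty_or_nonempty with hA | ⟨a, ha⟩
    · simp [hA]
    · calc infDist (y : X) (A ∩ closedBall 0 1) ≤ dist (y : X) a := infDist_le_dist_of_mem ha
        _ ≤ dist (y : X) 0 + dist a 0 := dist_triangle_right _ _ _
        _ ≤ 2 := by linarith [mem_closedBall.mp y.2.2, mem_closedBall.mp ha.2]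
  exact (le_ciSup hbdd ⟨y, hy⟩).trans (le_max_right _ _)

theorem exists_continuous_dist_lt_tendsto_zero {E : Type*} [NormedAddCommGroup E]
    [NormedSpace ℝ E] {s t : Set E} (ht : Convex ℝ t) (h0 : (0 : E) ∈ t) {d ε : ℝ}
    (hst : ∀ x ∈ s, infDist x t ≤ d) (hε : d < ε) :
    ∃ φ : C(s, E), Tendsto φ (comap Subtype.val (𝓝 0)) (𝓝 0) ∧
      ∀ x, φ x ∈ t ∧ dist (x : E) (φ x) < ε := by
  set δ := (ε - d) / 2 with hδ_def
  have hδ : 0 < δ := by linarith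
  -- Requiring `φ = 0` on the `δ`-ball is what makes `φ ∘ f` vanish at infinity.
  let T : s → Set E := fun x => t ∩ ball (x : E) ε ∩ {y | ‖(x : E)‖ < δ → y = 0}
  have hT : ∀ x, Convex ℝ (T x) := by
    intro x
    refine (ht.inter (convex_ball _ _)).inter ?_
    by_cases hx : ‖(x : E)‖ < δ
    · simp [hx, convex_singleton]
    · simp [hx, convex_univ]
  have hloc : ∀ x : s, ∃ c : E, ∀ᶠ y in 𝓝 x, c ∈ T y := by
    intro x
    have hd : 0 ≤ d := infDist_nonneg.trans (hst x x.2)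
    by_cases hx : ‖(x : E)‖ < 2 * δ
    · refine ⟨0, ?_⟩
      filter_upwards [(isOpen_lt continuous_subtype_val.norm continuous_const).mem_nhds hx]
        with y hy
      exact ⟨⟨h0, by rw [mem_ball, dist_zero_left]; linarith⟩, fun _ => rfl⟩
    · obtain ⟨a, hat, hxa⟩ := (infDist_lt_iff ⟨0, h0⟩).mp
        ((hst x x.2).trans_lt (lt_add_of_pos_right d hδ))
      refine ⟨a, ?_⟩
      filter_upwards [continuous_subtype_val.continuousAt.preimage_mem_nhds (ball_mem_nhds _ hδ)]
        with y hy
      have hy' : dist (y : E) x < δ := hy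
      refine ⟨⟨hat, ?_⟩, fun hyδ => ?_⟩
      · rw [mem_ball, dist_comm]
        linarith [dist_triangle (y : E) x a]
      · have := norm_sub_norm_le (x : E) y
        rw [← dist_eq_norm, dist_comm] at this
        linarith
  obtain ⟨φ, hφ⟩ := exists_continuous_forall_mem_convex_of_local_const hT hloc
  refine ⟨φ, tendsto_const_nhds.congr' ?_, fun x => ⟨(hφ x).1.1, ?_⟩⟩
  · filter_upwards [preimage_mem_comap (ball_mem_nhds (0 : E) hδ)] with x hx
    exact ((hφ x).2 (mem_ball_zero_iff.mp hx)).symm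
  · rw [dist_comm]
    exact (hφ x).1.2

theorem exists_approx_c0_general
    {C : Type*} [NonUnitalNormedRing C] [StarRing C] [NormedSpace ℂ C]
    (Ω : Type*) [TopologicalSpace Ω]
    (A B : NonUnitalStarSubalgebra ℂ C)
    (δ : ℝ) (hδ : 0 < δ)
    (f : C₀(Ω, C)) (hf : f ∈ c0ValIn (Ω := Ω) (B : Set C)) (hf1 : ‖f‖ ≤ 1) :
    ∃ g : C₀(Ω, C), g ∈ c0ValIn (Ω := Ω) (A : Set C) ∧ ‖g‖ ≤ 1 ∧
      ‖f - g‖ ≤ dKK (A : Set C) (B : Set C) + 4 * δ := by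
  have hd : 0 ≤ dKK (A : Set C) (B : Set C) :=
    infDist_nonneg.trans (infDist_le_dKK ⟨B.zero_mem, mem_closedBall_self zero_le_one⟩)
  have hfB : ∀ t, f t ∈ (B : Set C) ∩ closedBall 0 1 := fun t =>
    ⟨hf t, mem_closedBall_zero_iff.mpr ((f.norm_le zero_le_one).mp hf1 t)⟩
  have hAconv : Convex ℝ ((A : Set C) ∩ closedBall 0 1) :=
    (A.toNonUnitalSubalgebra.toSubmodule.restrictScalars ℝ).convex.inter (convex_closedBall 0 1)
  obtain ⟨φ, hφ0, hφ⟩ := exists_continuous_dist_lt_tendsto_zero hAconv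
    ⟨A.zero_mem, mem_closedBall_self zero_le_one⟩ (fun _ => infDist_le_dKK)
    (lt_add_of_pos_right _ (by positivity : 0 < 4 * δ))
  refine ⟨f.compCodRestrict hfB φ hφ0, fun t => (hφ _).1.1, ?_, ?_⟩
  · exact (ZeroAtInftyContinuousMap.norm_le _ zero_le_one).mpr fun t =>
      mem_closedBall_zero_iff.mp (hφ _).1.2
  · refine (ZeroAtInftyContinuousMap.norm_le _ (by positivity)).mpr fun t => ?_
    rw [ZeroAtInftyContinuousMap.sub_apply, ← dist_eq_norm]
    exact (hφ ⟨f t, hfB t⟩).2.le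

/-- For C*-subalgebras `𝒜, ℬ` of a C*-algebra `𝒞`, a locally compact Hausdorff space `Ω` and
`δ > 0`: every `f` in the closed unit ball of `C₀(Ω, ℬ)` admits `g` in the closed unit ball of
`C₀(Ω, 𝒜)` with `‖f - g‖ ≤ d_KK(𝒜, ℬ) + 4δ`. -/
theorem exists_approx_c0
    {C : Type*} [NonUnitalNormedRing C] [StarRing C] [CStarRing C] [NormedSpace ℂ C]
    [IsScalarTower ℂ C C] [SMulCommClass ℂ C C] [StarModule ℂ C] [CompleteSpace C]
    (Ω : Type*) [TopologicalSpace Ω] [LocallyCompactSpace Ω] [T2Space Ω]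
    (A B : NonUnitalStarSubalgebra ℂ C)
    (hA : IsClosed (A : Set C)) (hB : IsClosed (B : Set C))
    (δ : ℝ) (hδ : 0 < δ)
    (f : C₀(Ω, C)) (hf : f ∈ c0ValIn (Ω := Ω) (B : Set C)) (hf1 : ‖f‖ ≤ 1) :
    ∃ g : C₀(Ω, C), g ∈ c0ValIn (Ω := Ω) (A : Set C) ∧ ‖g‖ ≤ 1 ∧
      ‖f - g‖ ≤ dKK (A : Set C) (B : Set C) + 4 * δ :=
  exists_approx_c0_general Ω A B δ hδ f hf hf1
end
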